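/- Let γ(s,t) be an arclength-parametrized inextensible flow of partially null curves in E⁴₁ with partially null Frenet frame {T, N, B₁, B₂}, curvatures k₁, k₂ (k₃ = 0), flow ∂γ/∂t = β₁T + β₂N + β₃B₁ + β₄B₂ (so ∂β₁/∂s = β₂k₁), and ψ₁ = ⟨∂N/∂t, B₁⟩. If ∂β₄/∂s ≠ 0, then k₁ = −(∂ψ₁/∂s)/(∂β₄/∂s). -/

import Mathlib

/-!
Pair everything with the null vector `B₁`, which is constant in `s`. Then `∂ψ₁/∂s = ⟨∂²N/∂s∂t, B₁⟩`.
Swapping the partial derivatives and differentiating the Frenet relation `⟨∂N/∂s, B₁⟩ = 0` in `t`,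
together with `⟨T, B₁⟩ = ⟨B₁, B₁⟩ = 0`, turns this into `-k₁ ⟨∂T/∂t, B₁⟩`. Swapping the partial
derivatives of `γ` in `⟨∂γ/∂t, B₁⟩ = β₄` identifies `⟨∂T/∂t, B₁⟩` with `∂β₄/∂s`.
-/

noncomputable section

/-- The Minkowski bilinear form on `ℝ⁴` with signature `(-,+,+,+)`. -/
def mink (v w : Fin 4 → ℝ) : ℝ :=
  -(v 0 * w 0) + v 1 * w 1 + v 2 * w 2 + v 3 * w 3

/-- The Minkowski norm `‖v‖ = √|⟨v,v⟩|`. -/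
def mnorm (v : Fin 4 → ℝ) : ℝ := Real.sqrt |mink v v|

open Function

section PartialDerivatives

variable {E : Type*} [NormedAddCommGroup E] [NormedSpace ℝ E] {f : ℝ → ℝ → E} {s t : ℝ}

lemma hasDerivAt_slice_fst {L : ℝ × ℝ →L[ℝ] E} (hf : HasFDerivAt (uncurry f) L (s, t)) :
    HasDerivAt (fun x => f x t) (L (1, 0)) s := by
  exact hf.comp_hasDerivAt s ((hasDerivAt_id s).prodMk (hasDerivAt_const s t))

lemma hasDerivAt_slice_snd {L : ℝ × ℝ →L[ℝ] E} (hf : HasFDerivAt (uncurry f) L (s, t)) :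
    HasDerivAt (fun y => f s y) (L (0, 1)) t := by
  exact hf.comp_hasDerivAt t ((hasDerivAt_const t s).prodMk (hasDerivAt_id t))

lemma exists_hasDerivAt_mixed_partials (hf : ContDiff ℝ 2 (uncurry f)) (s t : ℝ) :
    ∃ D, HasDerivAt (fun x => deriv (fun y => f x y) t) D s ∧
      HasDerivAt (fun y => deriv (fun x => f x y) s) D t := by
  set F := uncurry f
  have hF : ∀ p, HasFDerivAt F (fderiv ℝ F p) p := fun p =>
    (hf.differentiable (by norm_num) p).hasFDerivAt
  have hF' : HasFDerivAt (fderiv ℝ F) (fderiv ℝ (fderiv ℝ F) (s, t)) (s, t) :=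
    ((hf.fderiv_right (m := 1) le_rfl).differentiable one_ne_zero (s, t)).hasFDerivAt
  have hsymm := (hf.contDiffAt (x := (s, t))).isSymmSndFDerivAt (by simp)
  refine ⟨fderiv ℝ (fderiv ℝ F) (s, t) (1, 0) (0, 1), ?_, ?_⟩
  · have h : (fun x => deriv (fun y => f x y) t) = fun x => fderiv ℝ F (x, t) (0, 1) :=
      funext fun x => (hasDerivAt_slice_snd (hF (x, t))).deriv
    rw [h]
    simpa using (hasDerivAt_slice_fst (f := fun x y => fderiv ℝ F (x, y)) hF').clm_apply
      (hasDerivAt_const s ((0, 1) : ℝ × ℝ))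
  · have h : (fun y => deriv (fun x => f x y) s) = fun y => fderiv ℝ F (s, y) (1, 0) :=
      funext fun y => (hasDerivAt_slice_fst (hF (s, y))).deriv
    rw [h, hsymm.eq]
    simpa using (hasDerivAt_slice_snd (f := fun x y => fderiv ℝ F (x, y)) hF').clm_apply
      (hasDerivAt_const t ((1, 0) : ℝ × ℝ))

end PartialDerivatives

section Minkowski

lemma mink_comm (u v : Fin 4 → ℝ) : mink u v = mink v u := by
  simp only [mink]; ring

@[simp]
lemma mink_add_left (u v w : Fin 4 → ℝ) : mink (u + v) w = mink u w + mink v w := by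
  simp only [mink, Pi.add_apply]; ring

@[simp]
lemma mink_smul_left (a : ℝ) (u w : Fin 4 → ℝ) : mink (a • u) w = a * mink u w := by
  simp only [mink, Pi.smul_apply, smul_eq_mul]; ring

@[simp]
lemma mink_neg_left (u w : Fin 4 → ℝ) : mink (-u) w = -mink u w := by
  simp only [mink, Pi.neg_apply]; ring

@[simp]
lemma mink_zero_right (u : Fin 4 → ℝ) : mink u 0 = 0 := by
  simp [mink]

lemma mink_frame_B₁ {T N B₁ B₂ : Fin 4 → ℝ} (a b c d : ℝ) (hTB₁ : mink T B₁ = 0)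
    (hNB₁ : mink N B₁ = 0) (hB₁B₁ : mink B₁ B₁ = 0) (hB₁B₂ : mink B₁ B₂ = 1) :
    mink (a • T + b • N + c • B₁ + d • B₂) B₁ = d := by
  simp [hTB₁, hNB₁, hB₁B₁, mink_comm B₂, hB₁B₂]

variable {u v : ℝ → Fin 4 → ℝ} {u' v' : Fin 4 → ℝ} {x : ℝ}

lemma HasDerivAt.mink (hu : HasDerivAt u u' x) (hv : HasDerivAt v v' x) :
    HasDerivAt (fun y => mink (u y) (v y)) (mink u' (v x) + mink (u x) v') x := by
  have hu := hasDerivAt_pi.1 hu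
  have hv := hasDerivAt_pi.1 hv
  exact ((((hu 0).mul (hv 0)).neg.add ((hu 1).mul (hv 1))).add ((hu 2).mul (hv 2))).add
    ((hu 3).mul (hv 3)) |>.congr_deriv (by simp only [_root_.mink]; ring)

lemma mink_deriv_add_eq_zero_of_const {c : ℝ} (hu : HasDerivAt u u' x) (hv : HasDerivAt v v' x)
    (h : ∀ y, mink (u y) (v y) = c) : mink u' (v x) + mink (u x) v' = 0 := by
  have hc : (fun y => mink (u y) (v y)) = fun _ => c := funext h
  exact (hu.mink hv).unique (hc ▸ hasDerivAt_const x c)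

lemma hasDerivAt_mink_deriv_of_hasDerivAt_zero {X B : ℝ → ℝ → Fin 4 → ℝ} {s t : ℝ}
    {D : Fin 4 → ℝ} (hX : ContDiff ℝ 2 (uncurry X)) (hB : HasDerivAt (fun x => B x t) 0 s)
    (hD : HasDerivAt (fun y => deriv (fun x => X x y) s) D t) :
    HasDerivAt (fun x => mink (deriv (fun y => X x y) t) (B x t)) (mink D (B s t)) s := by
  obtain ⟨D', hs, ht⟩ := exists_hasDerivAt_mixed_partials hX s t
  simpa [ht.unique hD] using hs.mink hB

end Minkowski

theorem k1_quotient_formula_partially_null_general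
    (γ T N B₁ B₂ : ℝ → ℝ → (Fin 4 → ℝ))
    (k₁ k₂ β₁ β₂ β₃ β₄ : ℝ → ℝ → ℝ)
    (ψ₁ : ℝ → ℝ → ℝ)
    (hγsmooth : ContDiff ℝ (⊤ : ℕ∞) (fun p : ℝ × ℝ => γ p.1 p.2))
    (hTsmooth : ContDiff ℝ (⊤ : ℕ∞) (fun p : ℝ × ℝ => T p.1 p.2))
    (hNsmooth : ContDiff ℝ (⊤ : ℕ∞) (fun p : ℝ × ℝ => N p.1 p.2))
    (hB₁smooth : ContDiff ℝ (⊤ : ℕ∞) (fun p : ℝ × ℝ => B₁ p.1 p.2))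
    (hB₁B₁ : ∀ s t : ℝ, mink (B₁ s t) (B₁ s t) = 0)
    (hB₁B₂ : ∀ s t : ℝ, mink (B₁ s t) (B₂ s t) = 1)
    (hTB₁ : ∀ s t : ℝ, mink (T s t) (B₁ s t) = 0)
    (hNB₁ : ∀ s t : ℝ, mink (N s t) (B₁ s t) = 0)
    -- arclength parametrization and Frenet equations (k₃ = 0)
    (hT : ∀ s t : ℝ, T s t = deriv (fun x => γ x t) s)
    (hfr₂ : ∀ s t : ℝ, deriv (fun x => N x t) s = -(k₁ s t) • T s t + k₂ s t • B₁ s t)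
    (hfr₃ : ∀ s t : ℝ, deriv (fun x => B₁ x t) s = 0)
    (hflow : ∀ s t : ℝ, deriv (fun x => γ s x) t =
      β₁ s t • T s t + β₂ s t • N s t + β₃ s t • B₁ s t + β₄ s t • B₂ s t)
    (hψ₁ : ∀ s t : ℝ, ψ₁ s t = mink (deriv (fun x => N s x) t) (B₁ s t)) :
    ∀ s t : ℝ, deriv (fun x => β₄ x t) s ≠ 0 →
      k₁ s t = -(deriv (fun x => ψ₁ x t) s / deriv (fun x => β₄ x t) s) := by
  intro s t hβ₄s
  have hC2 : ∀ {X : ℝ → ℝ → Fin 4 → ℝ}, ContDiff ℝ (⊤ : ℕ∞) (fun p : ℝ × ℝ => X p.1 p.2) →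
      ContDiff ℝ 2 (uncurry X) := fun h => h.of_le (WithTop.coe_le_coe.2 le_top)
  have hB₁ := (hB₁smooth.differentiable (by simp) (s, t)).hasFDerivAt
  have hB₁s : HasDerivAt (fun x => B₁ x t) 0 s :=
    hfr₃ s t ▸ (hasDerivAt_slice_fst hB₁).differentiableAt.hasDerivAt
  obtain ⟨B₁', hB₁t⟩ : ∃ B₁', HasDerivAt (fun y => B₁ s y) B₁' t :=
    ⟨_, hasDerivAt_slice_snd hB₁⟩
  obtain ⟨T', hTt⟩ : ∃ T', HasDerivAt (fun y => T s y) T' t :=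
    ⟨_, hasDerivAt_slice_snd (hTsmooth.differentiable (by simp) (s, t)).hasFDerivAt⟩
  obtain ⟨D, -, hD⟩ := exists_hasDerivAt_mixed_partials (hC2 hNsmooth) s t
  have hβ₄ : HasDerivAt (fun x => β₄ x t) (mink T' (B₁ s t)) s := by
    have hγs : (fun y => deriv (fun x => γ x y) s) = fun y => T s y :=
      funext fun y => (hT s y).symm
    convert hasDerivAt_mink_deriv_of_hasDerivAt_zero (hC2 hγsmooth) hB₁s (hγs ▸ hTt)
      using 2 with x
    rw [hflow, mink_frame_B₁ _ _ _ _ (hTB₁ x t) (hNB₁ x t) (hB₁B₁ x t) (hB₁B₂ x t)]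
  have hψ : HasDerivAt (fun x => ψ₁ x t) (mink D (B₁ s t)) s := by
    simpa only [← hψ₁] using hasDerivAt_mink_deriv_of_hasDerivAt_zero (hC2 hNsmooth) hB₁s hD
  have hNsB₁ := mink_deriv_add_eq_zero_of_const (c := 0) hD hB₁t fun y => by
    simp [hfr₂, hTB₁, hB₁B₁]
  have hTB₁' := mink_deriv_add_eq_zero_of_const hTt hB₁t (hTB₁ s)
  have hB₁B₁' := mink_deriv_add_eq_zero_of_const hB₁t hB₁t (hB₁B₁ s)
  simp only [hfr₂, mink_add_left, mink_smul_left] at hNsB₁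
  rw [mink_comm] at hB₁B₁'
  rw [hβ₄.deriv] at hβ₄s ⊢
  rw [hψ.deriv]
  field_simp
  linear_combination hNsB₁ + k₁ s t * hTB₁' - k₂ s t / 2 * hB₁B₁'

theorem k1_quotient_formula_partially_null
    (γ T N B₁ B₂ : ℝ → ℝ → (Fin 4 → ℝ))
    (k₁ k₂ β₁ β₂ β₃ β₄ : ℝ → ℝ → ℝ)
    (ψ₁ : ℝ → ℝ → ℝ)
    (hγsmooth : ContDiff ℝ (⊤ : ℕ∞) (fun p : ℝ × ℝ => γ p.1 p.2))
    (hTsmooth : ContDiff ℝ (⊤ : ℕ∞) (fun p : ℝ × ℝ => T p.1 p.2))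
    (hNsmooth : ContDiff ℝ (⊤ : ℕ∞) (fun p : ℝ × ℝ => N p.1 p.2))
    (hB₁smooth : ContDiff ℝ (⊤ : ℕ∞) (fun p : ℝ × ℝ => B₁ p.1 p.2))
    (hB₂smooth : ContDiff ℝ (⊤ : ℕ∞) (fun p : ℝ × ℝ => B₂ p.1 p.2))
    (hk₁smooth : ContDiff ℝ (⊤ : ℕ∞) (fun p : ℝ × ℝ => k₁ p.1 p.2))
    (hk₂smooth : ContDiff ℝ (⊤ : ℕ∞) (fun p : ℝ × ℝ => k₂ p.1 p.2))
    (hβ₁smooth : ContDiff ℝ (⊤ : ℕ∞) (fun p : ℝ × ℝ => β₁ p.1 p.2))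
    (hβ₂smooth : ContDiff ℝ (⊤ : ℕ∞) (fun p : ℝ × ℝ => β₂ p.1 p.2))
    (hβ₃smooth : ContDiff ℝ (⊤ : ℕ∞) (fun p : ℝ × ℝ => β₃ p.1 p.2))
    (hβ₄smooth : ContDiff ℝ (⊤ : ℕ∞) (fun p : ℝ × ℝ => β₄ p.1 p.2))
    (hTT : ∀ s t : ℝ, mink (T s t) (T s t) = 1)
    (hNN : ∀ s t : ℝ, mink (N s t) (N s t) = 1)
    (hB₁B₁ : ∀ s t : ℝ, mink (B₁ s t) (B₁ s t) = 0)
    (hB₂B₂ : ∀ s t : ℝ, mink (B₂ s t) (B₂ s t) = 0)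
    (hB₁B₂ : ∀ s t : ℝ, mink (B₁ s t) (B₂ s t) = 1)
    (hTN : ∀ s t : ℝ, mink (T s t) (N s t) = 0)
    (hTB₁ : ∀ s t : ℝ, mink (T s t) (B₁ s t) = 0)
    (hTB₂ : ∀ s t : ℝ, mink (T s t) (B₂ s t) = 0)
    (hNB₁ : ∀ s t : ℝ, mink (N s t) (B₁ s t) = 0)
    (hNB₂ : ∀ s t : ℝ, mink (N s t) (B₂ s t) = 0)
    -- arclength parametrization and Frenet equations (k₃ = 0)
    (hT : ∀ s t : ℝ, T s t = deriv (fun x => γ x t) s)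
    (hunit : ∀ s t : ℝ, mnorm (deriv (fun x => γ x t) s) = 1)
    (hfr₁ : ∀ s t : ℝ, deriv (fun x => T x t) s = k₁ s t • N s t)
    (hfr₂ : ∀ s t : ℝ, deriv (fun x => N x t) s = -(k₁ s t) • T s t + k₂ s t • B₁ s t)
    (hfr₃ : ∀ s t : ℝ, deriv (fun x => B₁ x t) s = 0)
    (hfr₄ : ∀ s t : ℝ, deriv (fun x => B₂ x t) s = -(k₂ s t) • N s t)
    (hflow : ∀ s t : ℝ, deriv (fun x => γ s x) t =
      β₁ s t • T s t + β₂ s t • N s t + β₃ s t • B₁ s t + β₄ s t • B₂ s t)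
    -- inextensibility: ∂β₁/∂s = β₂k₁
    (hinext : ∀ s t : ℝ, deriv (fun x => β₁ x t) s = β₂ s t * k₁ s t)
    (hψ₁ : ∀ s t : ℝ, ψ₁ s t = mink (deriv (fun x => N s x) t) (B₁ s t)) :
    ∀ s t : ℝ, deriv (fun x => β₄ x t) s ≠ 0 →
      k₁ s t = -(deriv (fun x => ψ₁ x t) s / deriv (fun x => β₄ x t) s) :=
  k1_quotient_formula_partially_null_general γ T N B₁ B₂ k₁ k₂ β₁ β₂ β₃ β₄ ψ₁ hγsmooth hTsmooth
    hNsmooth hB₁smooth hB₁B₁ hB₁B₂ hTB₁ hNB₁ hT hfr₂ hfr₃ hflow hψ₁
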